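/- arXiv:1806.11004 — 7 statements merged into one kernel-verified Lean document; each statement's English description precedes it below -/
import Mathlib

section
/- Let A be a commutative ring that is an integral domain whose fraction field is formally real (i.e., -1 is not a sum of squares in Frac(A)). Let B be an A-algebra such that for every real closed field R, every ring homomorphism A → R lifts (extends along A → B) to a ring homomorphism B → R. Then the structure morphism A → B is injective. -/
/-- A real closed field: an ordered field in which every nonnegative element is a
square and every odd-degree polynomial has a root. -/
class IsRealClosedField (R : Type) [Field R] [LinearOrder R] [IsStrictOrderedRing R] : Prop where
  isSquare_of_nonneg : ∀ x : R, 0 ≤ x → IsSquare x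
  exists_root_of_odd : ∀ p : Polynomial R, Odd p.natDegree → ∃ x : R, p.eval x = 0

/-!
Since `A` embeds into its fraction field `K`, it suffices to embed `K` into some real closed
field `R`: a lift `ψ : B → R` of `A → K → R` then forces `A → B` to be injective.

For `R` take, by Zorn's lemma, a maximal semireal intermediate field `M` of `K ⊆ K̄`. If `α ∉ M`,
then `-1` is a sum of squares in `M(α)`; writing its elements as polynomials in `α` of degree
`< [M(α) : M]` gives a sum of squares `S ∈ M[X]` of small degree with `minpoly α ∣ 1 + S`.
Over a semireal field a nonzero sum of squares of polynomials has even degree and a leading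
coefficient which is a sum of squares. Comparing degrees in `1 + S = p * h` then shows that
every odd-degree polynomial over `M` has a root (`h` has smaller odd degree) and that `a` or `-a`
is a square for every `a ∈ M` (take `p = X ^ 2 ∓ a`). So `M` is real closed, and its sums of
squares form the positive cone of an ordering.
-/

open Polynomial IntermediateField

theorem IsSumSq.map {R S F : Type*} [NonAssocSemiring R] [NonAssocSemiring S] [FunLike F R S]
    [RingHomClass F R S] (f : F) {x : R} (hx : IsSumSq x) : IsSumSq (f x) := by
  induction hx with
  | zero => simp
  | sq_add a _ ih => rw [map_add, map_mul]; exact ih.sq_add _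

theorem IsSemireal.of_ringHom {R S : Type*} [NonAssocSemiring R] [NonAssocSemiring S]
    [IsSemireal S] (f : R →+* S) : IsSemireal R :=
  ⟨fun hs h => one_add_ne_zero (hs.map f) (by rw [← map_one f, ← map_add, h, map_zero])⟩

instance IsSemireal.isFormallyReal {F : Type*} [Field F] [IsSemireal F] : IsFormallyReal F :=
  .of_eq_zero_of_eq_zero_of_mul_self_add fun {s a} hs h => by
    by_contra ha
    apply IsSemireal.one_add_ne_zero (hs.mul (IsSumSq.mul_self a⁻¹))
    field_simp
    linear_combination h

namespace Polynomial

theorem even_natDegree_and_isSumSq_leadingCoeff {R : Type*} [CommRing R] [IsDomain R]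
    [IsFormallyReal R] {S : R[X]} (hS : IsSumSq S) :
    Even S.natDegree ∧ IsSumSq S.leadingCoeff := by
  induction hS with
  | zero => simp
  | @sq_add g S hS ih =>
    obtain ⟨hev, hlc⟩ := ih
    rcases eq_or_ne g 0 with rfl | hg
    · simpa using ⟨hev, hlc⟩
    rcases eq_or_ne S 0 with rfl | hS0
    · simp [natDegree_mul hg hg]
    have hgg : (g * g).natDegree = g.natDegree + g.natDegree := natDegree_mul hg hg
    have hlcg : IsSumSq (g * g).leadingCoeff := by
      rw [leadingCoeff_mul]; exact .mul_self _
    rcases lt_trichotomy (g * g).natDegree S.natDegree with hlt | heq | hgt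
    · rw [natDegree_add_eq_right_of_natDegree_lt hlt,
        leadingCoeff_add_of_degree_lt (degree_lt_degree hlt)]
      exact ⟨hev, hlc⟩
    · have hsum : (g * g).leadingCoeff + S.leadingCoeff ≠ 0 := fun h =>
        leadingCoeff_ne_zero.mpr (mul_ne_zero hg hg)
          (IsFormallyReal.eq_zero_of_add_right hlcg hlc h)
      have hdeg : (g * g).degree = S.degree := by
        rw [degree_eq_natDegree (mul_ne_zero hg hg), degree_eq_natDegree hS0, heq]
      refine ⟨?_, ?_⟩
      · rwa [natDegree_eq_of_degree_eq_some (by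
          rw [degree_add_eq_of_leadingCoeff_add_ne_zero hsum, hdeg, max_self,
            degree_eq_natDegree hS0])]
      · rw [leadingCoeff_add_of_degree_eq hdeg hsum]; exact hlcg.add hlc
    · rw [natDegree_add_eq_left_of_natDegree_lt hgt,
        leadingCoeff_add_of_degree_lt' (degree_lt_degree hgt)]
      exact ⟨hgg ▸ ⟨_, rfl⟩, hlcg⟩

theorem eval_one_add_ne_zero_of_isSumSq {F : Type*} [CommRing F] [IsSemireal F]
    {S : F[X]} (hS : IsSumSq S) (x : F) : (1 + S).eval x ≠ 0 := by
  simpa using IsSemireal.one_add_ne_zero (hS.map (evalRingHom x))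

theorem exists_isSumSq_of_X_sq_sub_C_dvd_one_add {F : Type*} [Field F] [IsSemireal F]
    {a : F} {S : F[X]} (hS : IsSumSq S) (hdeg : S.natDegree ≤ 2) (hdvd : X ^ 2 - C a ∣ 1 + S) :
    ∃ c s : F, IsSumSq c ∧ IsSumSq s ∧ 1 + s = -(a * c) := by
  obtain ⟨h, hh⟩ := hdvd
  have hh0 : h ≠ 0 := by
    rintro rfl; exact eval_one_add_ne_zero_of_isSumSq hS 0 (by rw [hh, mul_zero, eval_zero])
  have hmonic : (X ^ 2 - C a).Monic := monic_X_pow_sub_C a two_ne_zero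
  have hdeg' : (1 + S).natDegree ≤ 2 := (natDegree_add_le _ _).trans (by simpa using hdeg)
  have hh_deg : h.natDegree = 0 := by
    rw [hh, hmonic.natDegree_mul' hh0, natDegree_X_pow_sub_C] at hdeg'
    omega
  have hlc := (even_natDegree_and_isSumSq_leadingCoeff (IsSumSq.one.add hS)).2
  rw [hh, leadingCoeff_mul, hmonic.leadingCoeff, one_mul, leadingCoeff, hh_deg] at hlc
  refine ⟨h.coeff 0, S.eval 0, hlc, hS.map (evalRingHom 0), ?_⟩
  have := congrArg (eval 0) hh
  rw [eq_C_of_natDegree_eq_zero hh_deg] at this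
  simpa using this

theorem exists_isRoot_of_odd_natDegree_of_not_irreducible {F : Type*} [Field F]
    {p : F[X]} (hodd : Odd p.natDegree) (hirr : ¬ Irreducible p)
    (ih : ∀ q : F[X], q.natDegree < p.natDegree → Odd q.natDegree → ∃ x, q.IsRoot x) :
    ∃ x, p.IsRoot x := by
  have hpos : 0 < p.natDegree := hodd.pos
  have hunit : ¬ IsUnit p := fun hu => hpos.ne' (natDegree_eq_zero_of_isUnit hu)
  obtain ⟨u, v, rfl, hu, hv⟩ : ∃ u v, p = u * v ∧ ¬ IsUnit u ∧ ¬ IsUnit v := by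
    simpa [irreducible_iff, hunit] using hirr
  have hu0 : u ≠ 0 := by rintro rfl; simp at hpos
  have hv0 : v ≠ 0 := by rintro rfl; simp at hpos
  have hu1 := natDegree_pos_iff_degree_pos.mpr (degree_pos_of_ne_zero_of_nonunit hu0 hu)
  have hv1 := natDegree_pos_iff_degree_pos.mpr (degree_pos_of_ne_zero_of_nonunit hv0 hv)
  rw [natDegree_mul hu0 hv0] at hodd ih
  rcases Nat.even_or_odd u.natDegree with hue | huo
  · obtain ⟨x, hx⟩ := ih v (by omega) (by simpa [Nat.odd_add', hue] using hodd)
    exact ⟨x, by simp [hx.eq_zero]⟩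
  · obtain ⟨x, hx⟩ := ih u (by omega) huo
    exact ⟨x, by simp [hx.eq_zero]⟩

end Polynomial

namespace IntermediateField

theorem exists_minpoly_dvd_one_add_isSumSq {F E : Type*} [Field F] [Field E] [Algebra F E]
    {α : E} (hα : IsIntegral F α) (h : IsSumSq (-1 : F⟮α⟯)) :
    ∃ S : F[X], IsSumSq S ∧ S.natDegree ≤ 2 * ((minpoly F α).natDegree - 1) ∧
      minpoly F α ∣ 1 + S := by
  have hrep : ∀ s : F⟮α⟯, IsSumSq s → ∃ S : F[X], IsSumSq S ∧
      S.natDegree ≤ 2 * ((minpoly F α).natDegree - 1) ∧ aeval (AdjoinSimple.gen F α) S = s := by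
    intro s hs
    induction hs with
    | zero => exact ⟨0, .zero, by simp, by simp⟩
    | sq_add a _ ih =>
      obtain ⟨S, hS, hdeg, rfl⟩ := ih
      obtain ⟨g, hg, rfl⟩ := (adjoin.powerBasis hα).exists_eq_aeval a
      rw [adjoin.powerBasis_dim] at hg
      refine ⟨g * g + S, hS.sq_add g, ?_, by simp⟩
      have hgg := natDegree_mul_le (p := g) (q := g)
      have := natDegree_add_le (g * g) S
      omega
  obtain ⟨S, hS, hdeg, hS1⟩ := hrep _ h
  refine ⟨S, hS, hdeg, ?_⟩
  rw [← minpoly_gen]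
  exact minpoly.dvd F _ (by rw [map_add, map_one, hS1, add_neg_cancel])

variable {K Ω : Type*} [Field K] [Field Ω] [Algebra K Ω]

theorem isSemireal_sSup_of_isChain {c : Set (IntermediateField K Ω)}
    (hc : IsChain (· ≤ ·) c) (hne : c.Nonempty) (hreal : ∀ N ∈ c, IsSemireal N) :
    IsSemireal ↥(sSup c) := by
  have hmem : ∀ x ∈ sSup c, ∃ N ∈ c, x ∈ N := by
    have := hne.to_subtype
    intro x hx
    rw [sSup_eq_iSup', ← SetLike.mem_coe, coe_iSup_of_directed hc.directed, Set.mem_iUnion] at hx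
    obtain ⟨⟨N, hN⟩, hxN⟩ := hx
    exact ⟨N, hN, hxN⟩
  have hdescend : ∀ x : ↥(sSup c), IsSumSq x →
      ∃ N ∈ c, ∃ hx : (x : Ω) ∈ N, IsSumSq (⟨x, hx⟩ : N) := by
    intro x hx
    induction hx with
    | zero => exact ⟨hne.some, hne.some_mem, zero_mem _, .zero⟩
    | sq_add a _ ih =>
      obtain ⟨N₁, hN₁, hs, hsN₁⟩ := ih
      obtain ⟨N₂, hN₂, ha⟩ := hmem a a.2
      obtain ⟨N, hN, h₁, h₂⟩ := hc.directedOn N₁ hN₁ N₂ hN₂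
      exact ⟨N, hN, _, (hsN₁.map (inclusion h₁)).sq_add ⟨a, h₂ ha⟩⟩
  rw [isSemireal_iff_not_isSumSq_neg_one]
  intro h
  obtain ⟨N, hN, _, hN1⟩ := hdescend _ h
  exact (hreal N hN).not_isSumSq_neg_one _ hN1

theorem exists_maximal_isSemireal [IsSemireal K] :
    ∃ M : IntermediateField K Ω, Maximal (fun N : IntermediateField K Ω => IsSemireal N) M := by
  have hbot : IsSemireal (⊥ : IntermediateField K Ω) := .of_ringHom (botEquiv K Ω).toRingHom
  obtain ⟨M, -, hM⟩ := zorn_le_nonempty₀ {N : IntermediateField K Ω | IsSemireal N}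
    (fun c hcs hc y hy => ⟨sSup c, isSemireal_sSup_of_isChain hc ⟨y, hy⟩ hcs, fun _ => le_sSup⟩)
    ⊥ hbot
  exact ⟨M, hM⟩

end IntermediateField

section MaximalSemireal

variable {K Ω : Type*} [Field K] [Field Ω] [Algebra K Ω] [IsAlgClosed Ω]
  {M : IntermediateField K Ω}

theorem exists_isSumSq_dvd_one_add_of_maximal_isSemireal
    (hM : Maximal (fun N : IntermediateField K Ω => IsSemireal N) M) {p : M[X]}
    (hp : Irreducible p) (hdeg : 2 ≤ p.natDegree) :
    ∃ S : M[X], IsSumSq S ∧ S.natDegree ≤ 2 * (p.natDegree - 1) ∧ p ∣ 1 + S := by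
  obtain ⟨α, hα⟩ := IsAlgClosed.exists_aeval_eq_zero Ω p (by
    rw [degree_eq_natDegree hp.ne_zero]; exact_mod_cast (by omega : p.natDegree ≠ 0))
  have hint : IsIntegral M α := isAlgebraic_iff_isIntegral.mp ⟨p, hp.ne_zero, hα⟩
  have hmin := minpoly.eq_of_irreducible hp hα
  have hlc : p.leadingCoeff⁻¹ ≠ 0 := inv_ne_zero (leadingCoeff_ne_zero.mpr hp.ne_zero)
  have hαM : α ∉ (algebraMap M Ω).range := by
    rw [← minpoly.two_le_natDegree_iff hint, ← hmin, natDegree_mul_C hlc]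
    exact hdeg
  have hnot : IsSumSq (-1 : M⟮α⟯) := by
    by_contra h
    have hle : M ≤ M⟮α⟯.restrictScalars K := fun x hx =>
      (mem_restrictScalars K).mpr (IntermediateField.algebraMap_mem M⟮α⟯ (⟨x, hx⟩ : M))
    have hreal : IsSemireal ↥(M⟮α⟯.restrictScalars K) := .of_not_isSumSq_neg_one h
    have hMα := hM.eq_of_le hreal hle
    exact hαM ⟨⟨α, hMα ▸ (mem_restrictScalars K).mpr (mem_adjoin_simple_self M α)⟩, rfl⟩
  obtain ⟨S, hS, hSdeg, hdvd⟩ := exists_minpoly_dvd_one_add_isSumSq hint hnot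
  rw [← hmin, natDegree_mul_C hlc] at hSdeg
  rw [← hmin] at hdvd
  exact ⟨S, hS, hSdeg, dvd_of_mul_right_dvd hdvd⟩

theorem isSquare_or_isSquare_neg_of_maximal_isSemireal
    (hM : Maximal (fun N : IntermediateField K Ω => IsSemireal N) M) (a : M) :
    IsSquare a ∨ IsSquare (-a) := by
  have := hM.prop
  have hnonsq : ∀ b : M, ¬ IsSquare b → ∃ c s : M, IsSumSq c ∧ IsSumSq s ∧ 1 + s = -(b * c) := by
    intro b hb
    have hirr : Irreducible (X ^ 2 - C b) := irreducible_of_degree_le_three_of_not_isRoot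
      (by simp) (fun x hx => hb ⟨x, by simp at hx; linear_combination -hx⟩)
    obtain ⟨S, hS, hdeg, hdvd⟩ :=
      exists_isSumSq_dvd_one_add_of_maximal_isSemireal hM hirr (by simp)
    exact exists_isSumSq_of_X_sq_sub_C_dvd_one_add hS (by simpa using hdeg) hdvd
  by_contra! ⟨ha, hna⟩
  obtain ⟨c₁, s₁, hc₁, hs₁, h₁⟩ := hnonsq a ha
  obtain ⟨c₂, s₂, hc₂, hs₂, h₂⟩ := hnonsq (-a) hna
  have hc₂0 : c₂ ≠ 0 := by
    rintro rfl; exact IsSemireal.one_add_ne_zero hs₂ (by simpa using h₂)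
  have hzero : c₂ * (1 + s₁) + c₁ * (1 + s₂) = 0 := by linear_combination c₂ * h₁ + c₁ * h₂
  exact mul_ne_zero hc₂0 (IsSemireal.one_add_ne_zero hs₁) <| IsFormallyReal.eq_zero_of_add_right
    (hc₂.mul (IsSumSq.one.add hs₁)) (hc₁.mul (IsSumSq.one.add hs₂)) hzero

theorem exists_isRoot_of_irreducible_of_odd_of_maximal_isSemireal
    (hM : Maximal (fun N : IntermediateField K Ω => IsSemireal N) M) {p : M[X]}
    (hp : Irreducible p) (hodd : Odd p.natDegree)
    (ih : ∀ q : M[X], q.natDegree < p.natDegree → Odd q.natDegree → ∃ x, q.IsRoot x) :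
    ∃ x, p.IsRoot x := by
  have := hM.prop
  obtain hp1 | hp3 : p.natDegree = 1 ∨ 3 ≤ p.natDegree := by
    obtain ⟨k, hk⟩ := hodd; omega
  · exact exists_root_of_degree_eq_one (degree_eq_iff_natDegree_eq_of_pos one_pos |>.mpr hp1)
  obtain ⟨S, hS, hdeg, h, hh⟩ := exists_isSumSq_dvd_one_add_of_maximal_isSemireal hM hp (by omega)
  have hh0 : h ≠ 0 := by
    rintro rfl; exact eval_one_add_ne_zero_of_isSumSq hS 0 (by rw [hh, mul_zero, eval_zero])
  have heven := (even_natDegree_and_isSumSq_leadingCoeff (IsSumSq.one.add hS)).1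
  have hle : (1 + S).natDegree ≤ 2 * (p.natDegree - 1) :=
    (natDegree_add_le _ _).trans (by simpa using hdeg)
  rw [hh, natDegree_mul hp.ne_zero hh0] at heven hle
  -- `h` has odd degree `< deg p`, and its roots would be roots of `1 + S`
  exfalso
  obtain ⟨β, hβ⟩ := ih h (by omega)
    (by simpa [Nat.even_add, Nat.not_even_iff_odd.mpr hodd] using heven)
  exact eval_one_add_ne_zero_of_isSumSq hS β (by rw [hh, eval_mul, hβ.eq_zero, mul_zero])

theorem exists_isRoot_of_odd_natDegree_of_maximal_isSemireal
    (hM : Maximal (fun N : IntermediateField K Ω => IsSemireal N) M) {p : M[X]}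
    (hodd : Odd p.natDegree) : ∃ x, p.IsRoot x := by
  induction hn : p.natDegree using Nat.strong_induction_on generalizing p with
  | _ n ih =>
    subst hn
    have ih' : ∀ q : M[X], q.natDegree < p.natDegree → Odd q.natDegree → ∃ x, q.IsRoot x :=
      fun q hq hqodd => ih _ hq hqodd rfl
    by_cases hirr : Irreducible p
    · exact exists_isRoot_of_irreducible_of_odd_of_maximal_isSemireal hM hirr hodd ih'
    · exact exists_isRoot_of_odd_natDegree_of_not_irreducible hodd hirr ih'

theorem isRealClosed_of_maximal_isSemireal
    (hM : Maximal (fun N : IntermediateField K Ω => IsSemireal N) M) : IsRealClosed M :=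
  { hM.prop with
    isSquare_or_isSquare_neg := isSquare_or_isSquare_neg_of_maximal_isSemireal hM
    exists_isRoot_of_odd_natDegree := exists_isRoot_of_odd_natDegree_of_maximal_isSemireal hM }

end MaximalSemireal

namespace IsRealClosed

variable {R : Type*} [Field R] [IsRealClosed R]

theorem isSquare_of_isSumSq {x : R} (hx : IsSumSq x) : IsSquare x := by
  rcases isSquare_or_isSquare_neg x with h | h
  · exact h
  · rw [IsFormallyReal.eq_zero_of_isSumSq_of_neg_isSumSq hx h.isSumSq]
    exact IsSquare.zero

variable (R) in
def sumSqCone : RingCone R where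
  __ := Subsemiring.sumSq R
  eq_zero_of_mem_of_neg_mem' hx hnx := IsFormallyReal.eq_zero_of_isSumSq_of_neg_isSumSq
    (Subsemiring.mem_sumSq.mp hx) (Subsemiring.mem_sumSq.mp hnx)

instance : HasMemOrNegMem (sumSqCone R) where
  mem_or_neg_mem x := (isSquare_or_isSquare_neg x).imp
    (fun h => Subsemiring.mem_sumSq.mpr h.isSumSq) (fun h => Subsemiring.mem_sumSq.mpr h.isSumSq)

end IsRealClosed

theorem IsRealClosed.exists_isRealClosedField (R : Type) [Field R] [IsRealClosed R] :
    ∃ (_ : LinearOrder R) (_ : IsStrictOrderedRing R), IsRealClosedField R := by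
  classical
  let : LinearOrder R := .mkOfAddGroupCone (sumSqCone R)
  have : IsOrderedRing R := .mkOfCone (sumSqCone R)
  refine ⟨_, IsOrderedRing.toIsStrictOrderedRing R, fun x hx => ?_,
    fun p hp => exists_isRoot_of_odd_natDegree hp⟩
  have : x - 0 ∈ sumSqCone R := hx
  exact isSquare_of_isSumSq (by simpa [sumSqCone, Subsemiring.mem_sumSq] using this)

/-- if `A` is a domain whose fraction field is formally real and every
ring homomorphism from `A` to a real closed field lifts to `B`, then `A → B` is
injective. -/
theorem stmt0 (A B : Type) [CommRing A] [IsDomain A] [CommRing B] [Algebra A B]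
    (hreal : ¬ IsSumSq (-1 : FractionRing A))
    (hlift : ∀ (R : Type) [Field R] [LinearOrder R] [IsStrictOrderedRing R] [IsRealClosedField R] (φ : A →+* R),
      ∃ ψ : B →+* R, ψ.comp (algebraMap A B) = φ) :
    Function.Injective (algebraMap A B) := by
  have : IsSemireal (FractionRing A) := .of_not_isSumSq_neg_one hreal
  obtain ⟨M, hM⟩ := IntermediateField.exists_maximal_isSemireal (K := FractionRing A)
    (Ω := AlgebraicClosure (FractionRing A))
  have := isRealClosed_of_maximal_isSemireal hM
  obtain ⟨_, _, _⟩ := IsRealClosed.exists_isRealClosedField M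
  obtain ⟨ψ, hψ⟩ := hlift M ((algebraMap (FractionRing A) M).comp (algebraMap A (FractionRing A)))
  refine Function.Injective.of_comp (f := ψ) ?_
  rw [← RingHom.coe_comp, hψ]
  exact (algebraMap (FractionRing A) M).injective.comp (IsFractionRing.injective A _)
end

section
/- In an integral domain A with formally real fraction field, the zero ideal is equal to the intersection of all real prime ideals of A. (An ideal I of A is real if whenever a₁² + ⋯ + a_k² ∈ I, then each a_i ∈ I.) -/
/-!
A field in which `-1` is not a sum of squares is formally real: if `a ≠ 0` and `a² + s = 0`
with `s` a sum of squares, then `-1 = s · (a⁻¹)²` is a sum of squares. Hence `⊥` is a real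
ideal of the fraction field, and its preimage `⊥` in `A` is a real prime ideal, so it is
one of the ideals being intersected.
-/

/-- An ideal `I` of a commutative ring is real if whenever a finite sum of squares
lies in `I`, each term lies in `I`. -/
def Ideal.IsRealIdeal {A : Type} [CommRing A] (I : Ideal A) : Prop :=
  ∀ (k : ℕ) (a : Fin k → A), (∑ i, a i ^ 2) ∈ I → ∀ i, a i ∈ I

theorem IsFormallyReal.of_not_isSumSq_neg_one {K : Type*} [Field K]
    (h : ¬ IsSumSq (-1 : K)) : IsFormallyReal K := by
  refine IsFormallyReal.of_eq_zero_of_eq_zero_of_mul_self_add fun {s a} hs hsum => ?_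
  by_contra ha
  have hneg : -1 = s * (a⁻¹ * a⁻¹) := by
    rw [eq_neg_of_add_eq_zero_right hsum]
    field_simp
  exact h (hneg ▸ hs.mul (IsSumSq.mul_self _))

theorem IsFormallyReal.eq_zero_of_sum_sq_eq_zero {R : Type*} [CommRing R] [IsFormallyReal R]
    {ι : Type*} {s : Finset ι} {a : ι → R} (h : ∑ i ∈ s, a i ^ 2 = 0) {i : ι} (hi : i ∈ s) :
    a i = 0 := by
  classical
  rw [← Finset.add_sum_erase s _ hi] at h
  have hsq : a i ^ 2 = 0 :=
    eq_zero_of_add_right (IsSquare.sq (a i)).isSumSq (IsSumSq.sum_sq _ a) h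
  exact (pow_eq_zero_iff two_ne_zero).mp hsq

theorem Ideal.isRealIdeal_bot {R : Type} [CommRing R] [IsFormallyReal R] :
    (⊥ : Ideal R).IsRealIdeal := fun _ _ h i => by
  rw [Ideal.mem_bot] at h ⊢
  exact IsFormallyReal.eq_zero_of_sum_sq_eq_zero h (Finset.mem_univ i)

theorem Ideal.IsRealIdeal.comap {R S : Type} [CommRing R] [CommRing S] (f : R →+* S)
    {I : Ideal S} (hI : I.IsRealIdeal) : (I.comap f).IsRealIdeal := fun k a h =>
  hI k (f ∘ a) (by simpa [map_sum] using h)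

/-- in an integral domain with formally real fraction field, the zero
ideal is the intersection of all real prime ideals. -/
theorem stmt1 (A : Type) [CommRing A] [IsDomain A]
    (hreal : ¬ IsSumSq (-1 : FractionRing A)) :
    (⊥ : Ideal A) = sInf {p : Ideal A | p.IsPrime ∧ p.IsRealIdeal} := by
  have := IsFormallyReal.of_not_isSumSq_neg_one hreal
  have hbot : (⊥ : Ideal A).IsRealIdeal := by
    rw [← Ideal.comap_bot_of_injective _ (IsFractionRing.injective A (FractionRing A))]
    exact Ideal.isRealIdeal_bot.comap _
  exact le_antisymm bot_le (sInf_le ⟨Ideal.isPrime_bot, hbot⟩)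
end

section
/- Let B ⊆ ℝ(x₁,…,x_n) be an ℝ[x₁,…,x_n]-subalgebra satisfying the substitution property over ℝ[x₁,…,x_n]. If f = p/q ∈ B with p, q ∈ ℝ[x₁,…,x_n] coprime, then the real zero set Z(q) is contained in Z(p). -/
open MvPolynomial

/-- The real zero set of a polynomial in `n` variables. -/
def Zset (n : ℕ) (r : MvPolynomial (Fin n) ℝ) : Set (Fin n → ℝ) :=
  {x | eval x r = 0}

/- Without real roots, the root bounds hold vacuously at `0` on both sides, so `P.eval 0` has the
sign of the leading coefficient and also, odd degree flipping it, the opposite sign. -/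
open Polynomial in
theorem Real.exists_isRoot_of_odd_natDegree {P : ℝ[X]} (hP : Odd P.natDegree) :
    ∃ x, P.IsRoot x := by
  by_contra! hP₀
  have hroots (y : ℝ) (hy : P.IsRoot y) : y < 0 ∧ 0 < y := (hP₀ y hy).elim
  have hsign : (Int.negOnePow P.natDegree : ℝ) = -1 := by simp [hP.neg_one_pow]
  rcases le_total 0 P.leadingCoeff with hlc | hlc
  · have h₁ := zero_lt_eval_of_roots_lt_of_leadingCoeff_nonneg (fun y hy ↦ (hroots y hy).1) hlc
    have h₂ := zero_lt_negOnePow_mul_eval_of_lt_roots_of_leadingCoeff_nonneg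
      (fun y hy ↦ (hroots y hy).2) hlc
    rw [hsign] at h₂
    linarith
  · have h₁ := eval_lt_zero_of_roots_lt_of_leadingCoeff_nonpos (fun y hy ↦ (hroots y hy).1) hlc
    have h₂ := negOnePow_mul_eval_lt_zero_of_lt_roots_of_leadingCoeff_nonpos
      (fun y hy ↦ (hroots y hy).2) hlc
    rw [hsign] at h₂
    linarith

instance : IsRealClosedField ℝ where
  isSquare_of_nonneg x hx := ⟨√x, (Real.mul_self_sqrt hx).symm⟩
  exists_root_of_odd _ hP := Real.exists_isRoot_of_odd_natDegree hP

theorem Subalgebra.map_eq_zero_of_map_eq_zero_of_div_mem {k K M : Type*} [CommSemiring k]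
    [Field K] [Algebra k K] [MonoidWithZero M] {B : Subalgebra k K} (ψ : B →* M) {a b : K}
    (ha : a ∈ B) (hb : b ∈ B) (hb₀ : b ≠ 0) (hab : a / b ∈ B) (hψb : ψ ⟨b, hb⟩ = 0) :
    ψ ⟨a, ha⟩ = 0 := by
  have hfactor : (⟨a, ha⟩ : B) = ⟨b, hb⟩ * ⟨a / b, hab⟩ := Subtype.ext (mul_div_cancel₀ a hb₀).symm
  rw [hfactor, map_mul, hψb, zero_mul]

theorem stmt4_general (n : ℕ) (B : Subalgebra ℝ (FractionRing (MvPolynomial (Fin n) ℝ)))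
    (hB : ∀ p : MvPolynomial (Fin n) ℝ, algebraMap _ (FractionRing (MvPolynomial (Fin n) ℝ)) p ∈ B)
    (hsub : ∀ (R : Type) [Field R] [LinearOrder R] [IsStrictOrderedRing R] [IsRealClosedField R] [Algebra ℝ R]
      (φ : MvPolynomial (Fin n) ℝ →ₐ[ℝ] R),
      ∃! ψ : B →ₐ[ℝ] R, ∀ p : MvPolynomial (Fin n) ℝ,
        ψ ⟨algebraMap _ _ p, hB p⟩ = φ p)
    (p q : MvPolynomial (Fin n) ℝ)
    (hq : q ≠ 0)
    (hf : algebraMap _ (FractionRing (MvPolynomial (Fin n) ℝ)) p /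
          algebraMap _ (FractionRing (MvPolynomial (Fin n) ℝ)) q ∈ B) :
    Zset n q ⊆ Zset n p := by
  intro x hx
  obtain ⟨ψ, hψ, -⟩ := hsub ℝ (aeval x)
  have hq₀ : algebraMap _ (FractionRing (MvPolynomial (Fin n) ℝ)) q ≠ 0 :=
    IsFractionRing.to_map_ne_zero_of_mem_nonZeroDivisors (mem_nonZeroDivisors_of_ne_zero hq)
  have hψp := Subalgebra.map_eq_zero_of_map_eq_zero_of_div_mem (ψ : B →* ℝ) (hB p) (hB q) hq₀ hf
    (by simpa [hψ, Zset] using hx)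
  simpa [Zset, hψ] using hψp

/-- if `B ⊆ ℝ(x₁,…,xₙ)` is an `ℝ[x₁,…,xₙ]`-subalgebra satisfying the
substitution property, then for `f = p/q ∈ B` with `p, q` coprime one has
`Z(q) ⊆ Z(p)`. -/
theorem stmt4 (n : ℕ) (B : Subalgebra ℝ (FractionRing (MvPolynomial (Fin n) ℝ)))
    (hB : ∀ p : MvPolynomial (Fin n) ℝ, algebraMap _ (FractionRing (MvPolynomial (Fin n) ℝ)) p ∈ B)
    (hsub : ∀ (R : Type) [Field R] [LinearOrder R] [IsStrictOrderedRing R] [IsRealClosedField R] [Algebra ℝ R]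
      (φ : MvPolynomial (Fin n) ℝ →ₐ[ℝ] R),
      ∃! ψ : B →ₐ[ℝ] R, ∀ p : MvPolynomial (Fin n) ℝ,
        ψ ⟨algebraMap _ _ p, hB p⟩ = φ p)
    (p q : MvPolynomial (Fin n) ℝ)
    (hcop : ∀ d : MvPolynomial (Fin n) ℝ, d ∣ p → d ∣ q → IsUnit d)
    (hq : q ≠ 0)
    (hf : algebraMap _ (FractionRing (MvPolynomial (Fin n) ℝ)) p /
          algebraMap _ (FractionRing (MvPolynomial (Fin n) ℝ)) q ∈ B) :
    Zset n q ⊆ Zset n p :=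
  stmt4_general n B hB hsub p q hq hf
end

section
/- On the Cartan umbrella V = {(x,y,z) ∈ ℝ³ : x³ = z(x² + y²)}, the function f defined by f(x,y,z) = x³/(x² + y²) for (x,y) ≠ (0,0) and f(0,0,z) = z is continuous on V, agrees with the regular function x³/(x²+y²) on the Zariski-dense open set where x²+y² ≠ 0, and the zero set on V of the denominator q = x² + y² is the entire z-axis {(0,0,z) : z ∈ ℝ}, which has codimension one in V (V has dimension 2). -/
open MvPolynomial

/-- The Cartan umbrella `x³ = z(x² + y²)` in `ℝ³`, with coordinates `(x, y, z)`. -/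
def CartanUmbrella : Set (ℝ × ℝ × ℝ) :=
  {p | p.1 ^ 3 = p.2.2 * (p.1 ^ 2 + p.2.1 ^ 2)}

/-- The function `f = x³/(x²+y²)` extended by `z` on the stick. -/
noncomputable def fCartan : ℝ × ℝ × ℝ → ℝ :=
  fun p => if p.1 ^ 2 + p.2.1 ^ 2 = 0 then p.2.2 else p.1 ^ 3 / (p.1 ^ 2 + p.2.1 ^ 2)


/-- The substitution `x = s(1+u²)`, `y = su(1+u²)`, `z = s` parametrizing the umbrella. -/
noncomputable def vSub : Fin 3 → MvPolynomial (Fin 2) ℝ :=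
  ![X 0 * (1 + X 1 ^ 2), X 0 * X 1 * (1 + X 1 ^ 2), X 0]

lemma eval_bind_vSub (P : MvPolynomial (Fin 3) ℝ) (w : Fin 2 → ℝ) :
    eval w (bind₁ vSub P) =
      eval ![w 0 * (1 + w 1 ^ 2), w 0 * w 1 * (1 + w 1 ^ 2), w 0] P := by
  have key : eval w (bind₁ vSub P) = eval (fun i => eval w (vSub i)) P :=
    eval₂Hom_bind₁ (RingHom.id ℝ) w vSub P
  rw [key]
  have : (fun i => eval w (vSub i)) = ![w 0 * (1 + w 1 ^ 2), w 0 * w 1 * (1 + w 1 ^ 2), w 0] := by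
    funext i; fin_cases i <;> simp [vSub]
  rw [this]

lemma zariski_dense (P : MvPolynomial (Fin 3) ℝ)
    (h : ∀ p ∈ CartanUmbrella, p.1 ^ 2 + p.2.1 ^ 2 ≠ 0 → eval ![p.1, p.2.1, p.2.2] P = 0) :
    ∀ p ∈ CartanUmbrella, eval ![p.1, p.2.1, p.2.2] P = 0 := by
  set g : MvPolynomial (Fin 2) ℝ := bind₁ vSub P with hg
  -- g evaluates to 0 at every (s,u) with s ≠ 0
  have hg0 : ∀ w : Fin 2 → ℝ, w 0 ≠ 0 → eval w g = 0 := by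
    intro w hw
    rw [hg, eval_bind_vSub]
    have h1 : (0:ℝ) < 1 + w 1 ^ 2 := by positivity
    set a := w 0 * (1 + w 1 ^ 2)
    set b := w 0 * w 1 * (1 + w 1 ^ 2)
    have hmem : ((a, b, w 0) : ℝ × ℝ × ℝ) ∈ CartanUmbrella := by
      show a ^ 3 = w 0 * (a ^ 2 + b ^ 2)
      simp only [a, b]; ring
    have hne : a ^ 2 + b ^ 2 ≠ 0 := by
      have : a ≠ 0 := mul_ne_zero hw (ne_of_gt h1)
      positivity
    exact h (a, b, w 0) hmem hne
  -- hence X 0 * g = 0 as a polynomial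
  have hXg : (X 0 : MvPolynomial (Fin 2) ℝ) * g = 0 := by
    apply MvPolynomial.funext
    intro w
    rcases eq_or_ne (w 0) 0 with h0 | h0
    · simp [h0]
    · simp [hg0 w h0]
  have hgzero : g = 0 := by
    rcases mul_eq_zero.mp hXg with hX | h
    · exact absurd hX (MvPolynomial.X_ne_zero 0)
    · exact h
  -- map to ℂ and evaluate at u = I
  intro p hp
  rcases eq_or_ne (p.1 ^ 2 + p.2.1 ^ 2) 0 with h0 | h0
  · have hx : p.1 = 0 := by nlinarith [sq_nonneg p.1, sq_nonneg p.2.1]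
    have hy : p.2.1 = 0 := by nlinarith [sq_nonneg p.1, sq_nonneg p.2.1]
    -- complexify
    have hmap : map (algebraMap ℝ ℂ) g = 0 := by rw [hgzero, map_zero]
    have hC : eval ![(p.2.2 : ℂ), Complex.I] (map (algebraMap ℝ ℂ) g) = 0 := by
      rw [hmap, map_zero]
    rw [hg, map_bind₁] at hC
    have key : eval ![(p.2.2 : ℂ), Complex.I]
        (bind₁ (fun i => map (algebraMap ℝ ℂ) (vSub i)) (map (algebraMap ℝ ℂ) P))
        = eval (fun i => eval ![(p.2.2 : ℂ), Complex.I] (map (algebraMap ℝ ℂ) (vSub i)))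
            (map (algebraMap ℝ ℂ) P) :=
      eval₂Hom_bind₁ (RingHom.id ℂ) _ _ _
    rw [key] at hC
    have hpt : (fun i => eval ![(p.2.2 : ℂ), Complex.I] (map (algebraMap ℝ ℂ) (vSub i)))
        = ![(0:ℂ), 0, (p.2.2 : ℂ)] := by
      funext i
      fin_cases i <;>
        simp [vSub, Complex.I_sq]
    rw [hpt] at hC
    -- relate complex evaluation to real evaluation
    have hre : eval ![(0:ℂ), 0, (p.2.2:ℂ)] (map (algebraMap ℝ ℂ) P)
        = algebraMap ℝ ℂ (eval ![0, 0, p.2.2] P) := by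
      have := MvPolynomial.eval₂_comp_left (algebraMap ℝ ℂ) (RingHom.id ℝ)
        (![0, 0, p.2.2] : Fin 3 → ℝ) P
      rw [eval₂_id, RingHom.comp_id, eval₂_eq_eval_map] at this
      have hfun : (⇑(algebraMap ℝ ℂ) ∘ ![0, 0, p.2.2]) = ![(0:ℂ), 0, (p.2.2:ℂ)] := by
        funext i; fin_cases i <;> simp
      rw [hfun] at this
      exact this.symm
    rw [hre] at hC
    have : eval ![(0:ℝ), 0, p.2.2] P = 0 := by
      exact_mod_cast (map_eq_zero_iff _ (algebraMap ℝ ℂ).injective).mp hC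
    rw [hx, hy]
    convert this using 2
  · exact h p hp h0

/-- on the Cartan umbrella `V`, the function `f` (given by
`x³/(x²+y²)` off the stick and by `z` on the stick) is continuous, agrees with the
regular function `x³/(x²+y²)` on the Zariski-dense subset of `V` where
`x² + y² ≠ 0`, and the zero set on `V` of the denominator `q = x² + y²` is exactly
the `z`-axis, a curve of codimension one in the surface `V`. -/
theorem stmt5 :
    ContinuousOn fCartan CartanUmbrella ∧
    (∀ p ∈ CartanUmbrella, p.1 ^ 2 + p.2.1 ^ 2 ≠ 0 →
      fCartan p = p.1 ^ 3 / (p.1 ^ 2 + p.2.1 ^ 2)) ∧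
    -- the subset where the denominator does not vanish is Zariski dense in `V`:
    (∀ P : MvPolynomial (Fin 3) ℝ,
      (∀ p ∈ CartanUmbrella, p.1 ^ 2 + p.2.1 ^ 2 ≠ 0 → eval ![p.1, p.2.1, p.2.2] P = 0) →
      ∀ p ∈ CartanUmbrella, eval ![p.1, p.2.1, p.2.2] P = 0) ∧
    -- the zero set of the denominator on `V` is the whole `z`-axis:
    {p ∈ CartanUmbrella | p.1 ^ 2 + p.2.1 ^ 2 = 0} = {p : ℝ × ℝ × ℝ | p.1 = 0 ∧ p.2.1 = 0} := by
  have hfz : ∀ p ∈ CartanUmbrella, fCartan p = p.2.2 := by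
    intro p hp
    unfold fCartan
    split_ifs with h
    · rfl
    · rw [hp]
      exact mul_div_cancel_right₀ _ h
  refine ⟨?_, ?_, zariski_dense, ?_⟩
  · exact ContinuousOn.congr (Continuous.continuousOn (by fun_prop)) hfz
  · intro p hp h0
    simp [fCartan, h0]
  · ext p
    simp only [Set.mem_setOf_eq, Set.mem_sep_iff]
    constructor
    · rintro ⟨hp, h0⟩
      constructor <;> nlinarith [sq_nonneg p.1, sq_nonneg p.2.1]
    · rintro ⟨hx, hy⟩
      refine ⟨?_, by rw [hx, hy]; ring⟩
      show p.1 ^ 3 = p.2.2 * (p.1 ^ 2 + p.2.1 ^ 2)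
      rw [hx, hy]; ring
end

section
/- Let G ∈ ℝ(θ) be a one-variable rational function regular on all of ℝ (no real poles) such that G(θ) = G(−θ) for all θ ∈ ℝ. Then there exists a one-variable rational function F, regular at every point of [0,∞), such that G(θ) = F(θ²) for all θ ∈ ℝ. -/
open Polynomial

private lemma coeff_comp_neg_X (P : Polynomial ℝ) (n : ℕ) :
    (P.comp (-X)).coeff n = (-1) ^ n * P.coeff n := by
  induction P using Polynomial.induction_on' with
  | add p q hp hq => simp [add_comp, hp, hq, mul_add]
  | monomial k a =>
      rw [monomial_comp, neg_pow]
      have : ((-1 : Polynomial ℝ)) ^ k = C ((-1 : ℝ) ^ k) := by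
        rw [map_pow, map_neg, map_one]
      rw [this, ← mul_assoc, ← C_mul]
      simp only [coeff_C_mul, coeff_X_pow, coeff_monomial]
      rcases eq_or_ne k n with h | h
      · subst h; simp [mul_comm]
      · rw [if_neg h, if_neg (fun hn : n = k => h hn.symm)]
        ring

/-- An even polynomial is a polynomial in `X^2` (as a function). -/
private lemma even_poly (P : Polynomial ℝ) (h : ∀ θ : ℝ, P.eval (-θ) = P.eval θ) :
    ∃ Q : Polynomial ℝ, ∀ θ : ℝ, Q.eval (θ ^ 2) = P.eval θ := by
  have hcomp : P.comp (-X) = P := by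
    apply Polynomial.funext
    intro x
    simp [eval_comp, h]
  have hodd : ∀ n : ℕ, Odd n → P.coeff n = 0 := by
    intro n hn
    have := coeff_comp_neg_X P n
    rw [hcomp, hn.neg_one_pow, neg_one_mul] at this
    linarith [this]
  set N := P.natDegree
  refine ⟨∑ k ∈ Finset.range (N + 1), C (P.coeff (2 * k)) * X ^ k, fun θ => ?_⟩
  have hev : P.eval θ = ∑ n ∈ Finset.range (2 * (N + 1)), P.coeff n * θ ^ n := by
    rw [Polynomial.eval_eq_sum_range' (by omega : P.natDegree < 2 * (N + 1))]
  have hsplit : ∀ M : ℕ, ∑ n ∈ Finset.range (2 * M), P.coeff n * θ ^ n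
      = ∑ k ∈ Finset.range M, (P.coeff (2 * k) * θ ^ (2 * k)
        + P.coeff (2 * k + 1) * θ ^ (2 * k + 1)) := by
    intro M
    induction M with
    | zero => simp
    | succ m ih =>
        have : 2 * (m + 1) = (2 * m + 1) + 1 := by ring
        rw [this, Finset.sum_range_succ, Finset.sum_range_succ, ih,
          Finset.sum_range_succ]
        ring
  rw [hev, hsplit]
  have : ∀ k ∈ Finset.range (N + 1), P.coeff (2 * k) * θ ^ (2 * k)
      + P.coeff (2 * k + 1) * θ ^ (2 * k + 1)
      = P.coeff (2 * k) * (θ ^ 2) ^ k := by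
    intro k _
    rw [hodd (2 * k + 1) ⟨k, by ring⟩, ← pow_mul]
    ring
  rw [Finset.sum_congr rfl this]
  simp [eval_finset_sum]

/-- if `G = R/V` is a one-variable rational function with no real
pole which is even (`G(θ) = G(−θ)`), then `G(θ) = F(θ²)` for a rational function
`F = U/W` regular at every point of `[0, ∞)`. -/
theorem stmt15 (R V : Polynomial ℝ) (hV : ∀ x : ℝ, V.eval x ≠ 0)
    (heven : ∀ θ : ℝ, R.eval θ / V.eval θ = R.eval (-θ) / V.eval (-θ)) :
    ∃ U W : Polynomial ℝ, (∀ x : ℝ, 0 ≤ x → W.eval x ≠ 0) ∧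
      ∀ θ : ℝ, R.eval θ / V.eval θ = U.eval (θ ^ 2) / W.eval (θ ^ 2) := by
  set Nn := R * (V.comp (-X)) with hN
  set D := V * (V.comp (-X)) with hD
  have hcross : ∀ θ : ℝ, R.eval θ * V.eval (-θ) = R.eval (-θ) * V.eval θ := by
    intro θ
    have := heven θ
    rw [div_eq_div_iff (hV θ) (hV (-θ))] at this
    exact this
  have hNeven : ∀ θ : ℝ, Nn.eval (-θ) = Nn.eval θ := by
    intro θ
    simp only [hN, eval_mul, eval_comp, eval_neg, eval_X, neg_neg]
    linarith [hcross θ]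
  have hDeven : ∀ θ : ℝ, D.eval (-θ) = D.eval θ := by
    intro θ
    simp only [hD, eval_mul, eval_comp, eval_neg, eval_X, neg_neg]
    ring
  obtain ⟨U, hU⟩ := even_poly Nn hNeven
  obtain ⟨W, hW⟩ := even_poly D hDeven
  refine ⟨U, W, fun x hx => ?_, fun θ => ?_⟩
  · have : x = (Real.sqrt x) ^ 2 := (Real.sq_sqrt hx).symm
    rw [this, hW]
    simp only [hD, eval_mul, eval_comp, eval_neg, eval_X]
    exact mul_ne_zero (hV _) (hV _)
  · rw [hU, hW]
    simp only [hN, hD, eval_mul, eval_comp, eval_neg, eval_X]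
    rw [mul_div_mul_right _ _ (hV (-θ))]
end

section
/- On the variety V = {(x,y,z₁,z₂) ∈ ℝ⁴ : x⁸ = (z₁² + z₂²) y⁸}, the rational function g = x²/y², defined where y ≠ 0, extends to a continuous function on all of V, equal to (z₁² + z₂²)^{1/4} everywhere on V. Moreover the rational function x/y does NOT extend continuously to V: along points (x, y, 1, 0) ∈ V with y ≠ 0 one has (x/y)⁸ = 1, and x/y takes both values near 1 and near −1 arbitrarily close to (0,0,1,0), so no continuous extension exists at (0,0,1,0). -/
/-- The hypersurface `x⁸ = (z₁² + z₂²) y⁸` in `ℝ⁴`, coordinates `(x, y, z₁, z₂)`. -/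
def V17 : Set (ℝ × ℝ × ℝ × ℝ) :=
  {p | p.1 ^ 8 = (p.2.2.1 ^ 2 + p.2.2.2 ^ 2) * p.2.1 ^ 8}

/-- The continuous extension `(z₁² + z₂²)^{1/4}` of `x²/y²`. -/
noncomputable def g17 : ℝ × ℝ × ℝ × ℝ → ℝ :=
  fun p => (p.2.2.1 ^ 2 + p.2.2.2 ^ 2) ^ ((1 : ℝ) / 4)

open Filter Topology

/- On `V` one has `(x²/y²)⁴ = z₁² + z₂²` wherever `y ≠ 0`, and `x²/y² ≥ 0`, so `x²/y²` is the
nonnegative fourth root `(z₁² + z₂²)^{1/4}`, which is continuous on all of `ℝ⁴`. The quotient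
`x/y`, by contrast, is only determined up to an eighth root of unity: for every `s` with
`s⁸ = z₁² + z₂²` the punctured line `t ↦ (s t, t, z₁, z₂)` lies in `V`, carries `x/y ≡ s` and
tends to `(0, 0, z₁, z₂)`. Taking `s = ±1` at `(0, 0, 1, 0)` forces an extension to take both
values `1` and `-1` there. -/

theorem continuous_g17 : Continuous g17 :=
  (by fun_prop : Continuous fun p : ℝ × ℝ × ℝ × ℝ => p.2.2.1 ^ 2 + p.2.2.2 ^ 2).rpow_const
    fun _ => Or.inr (by norm_num)

theorem div_pow_eight_eq_of_mem_V17 {p : ℝ × ℝ × ℝ × ℝ} (hp : p ∈ V17) (hy : p.2.1 ≠ 0) :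
    (p.1 / p.2.1) ^ 8 = p.2.2.1 ^ 2 + p.2.2.2 ^ 2 := by
  have hV : p.1 ^ 8 = (p.2.2.1 ^ 2 + p.2.2.2 ^ 2) * p.2.1 ^ 8 := hp
  rw [div_pow, hV, mul_div_cancel_right₀ _ (pow_ne_zero 8 hy)]

theorem g17_eq_sq_div_sq {p : ℝ × ℝ × ℝ × ℝ} (hp : p ∈ V17) (hy : p.2.1 ≠ 0) :
    g17 p = p.1 ^ 2 / p.2.1 ^ 2 := by
  have hfourth : (p.1 ^ 2 / p.2.1 ^ 2) ^ 4 = p.2.2.1 ^ 2 + p.2.2.2 ^ 2 := by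
    rw [← div_pow_eight_eq_of_mem_V17 hp hy]
    ring
  rw [g17, ← hfourth, one_div]
  exact_mod_cast Real.pow_rpow_inv_natCast (by positivity) four_ne_zero

section Line

variable {s z₁ z₂ : ℝ}

theorem line_mem_V17 (hs : s ^ 8 = z₁ ^ 2 + z₂ ^ 2) (t : ℝ) : (s * t, t, z₁, z₂) ∈ V17 := by
  change (s * t) ^ 8 = (z₁ ^ 2 + z₂ ^ 2) * t ^ 8
  rw [mul_pow, hs]

theorem tendsto_line_nhdsWithin_V17 (hs : s ^ 8 = z₁ ^ 2 + z₂ ^ 2) :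
    Tendsto (fun t : ℝ => (s * t, t, z₁, z₂)) (𝓝[≠] 0) (𝓝[V17] (0, 0, z₁, z₂)) := by
  refine tendsto_nhdsWithin_of_tendsto_nhds_of_eventually_within _ ?_
    (Eventually.of_forall (line_mem_V17 hs))
  have hcont : Continuous fun t : ℝ => (s * t, t, z₁, z₂) := by fun_prop
  simpa using (hcont.tendsto 0).mono_left nhdsWithin_le_nhds

theorem eq_of_continuousWithinAt_of_eq_div (h : ℝ × ℝ × ℝ × ℝ → ℝ)
    (hc : ContinuousWithinAt h V17 (0, 0, z₁, z₂))
    (heq : ∀ p ∈ V17, p.2.1 ≠ 0 → h p = p.1 / p.2.1) (hs : s ^ 8 = z₁ ^ 2 + z₂ ^ 2) :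
    h (0, 0, z₁, z₂) = s := by
  have hlim := hc.tendsto.comp (tendsto_line_nhdsWithin_V17 hs)
  have hconst : h ∘ (fun t : ℝ => (s * t, t, z₁, z₂)) =ᶠ[𝓝[≠] 0] fun _ => s := by
    filter_upwards [self_mem_nhdsWithin] with t ht
    exact (heq _ (line_mem_V17 hs t) ht).trans (mul_div_cancel_right₀ s ht)
  exact tendsto_nhds_unique (hlim.congr' hconst) tendsto_const_nhds

end Line

/-- on `V : x⁸ = (z₁²+z₂²) y⁸`, the rational function `x²/y²` extends
continuously to all of `V` as `(z₁²+z₂²)^{1/4}`, whereas `x/y` satisfies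
`(x/y)⁸ = 1` on `{z₁ = 1, z₂ = 0} ∩ {y ≠ 0}` and admits no continuous extension
at the point `(0,0,1,0)`. -/
theorem stmt17 :
    ContinuousOn g17 V17 ∧
    (∀ p ∈ V17, p.2.1 ≠ 0 → g17 p = p.1 ^ 2 / p.2.1 ^ 2) ∧
    (∀ p ∈ V17, p.2.1 ≠ 0 → p.2.2.1 = 1 → p.2.2.2 = 0 → (p.1 / p.2.1) ^ 8 = 1) ∧
    ¬ ∃ h : ℝ × ℝ × ℝ × ℝ → ℝ,
        ContinuousWithinAt h V17 (0, 0, 1, 0) ∧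
        ∀ p ∈ V17, p.2.1 ≠ 0 → h p = p.1 / p.2.1 := by
  refine ⟨continuous_g17.continuousOn, fun p hp hy => g17_eq_sq_div_sq hp hy, ?_, ?_⟩
  · intro p hp hy h₁ h₂
    rw [div_pow_eight_eq_of_mem_V17 hp hy, h₁, h₂]
    norm_num
  · rintro ⟨h, hc, heq⟩
    have hplus := eq_of_continuousWithinAt_of_eq_div h hc heq (s := 1) (by norm_num)
    have hminus := eq_of_continuousWithinAt_of_eq_div h hc heq (s := -1) (by norm_num)
    linarith
end

section
/- On the variety V = {(x,y,z) ∈ ℝ³ : y³ = z²x³}, the rational function f = y/x (defined where x ≠ 0) satisfies f³ = z² on V where x ≠ 0, and extends to a continuous function on all of V equal to z^{2/3} = (z²)^{1/3}. Along the arc γ(t) = (0, 0, t) contained in V, the continuous extension of f satisfies f(γ(t)) = t^{2/3}, which is a Puiseux series in t that is not a formal power series in t. -/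
/-- The surface `y³ = z²x³` in `ℝ³`, coordinates `(x, y, z)`. -/
def V18 : Set (ℝ × ℝ × ℝ) :=
  {p | p.2.1 ^ 3 = p.2.2 ^ 2 * p.1 ^ 3}

/-- The continuous extension `(z²)^{1/3}` of `y/x`. -/
noncomputable def f18 : ℝ × ℝ × ℝ → ℝ :=
  fun p => (p.2.2 ^ 2) ^ ((1 : ℝ) / 3)

lemma cube_root_cube {a : ℝ} (ha : 0 ≤ a) : (a ^ 3) ^ ((1 : ℝ) / 3) = a := by
  rw [← Real.rpow_natCast a 3, ← Real.rpow_mul ha]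
  norm_num

lemma slope_calc (n : ℕ) :
    ((((1 : ℝ) / (n + 1)) ^ 3) ^ 2) ^ ((1 : ℝ) / 3) = ((1 : ℝ) / (n + 1)) ^ 2 := by
  have ha : (0 : ℝ) ≤ (1 : ℝ) / (n + 1) := by positivity
  rw [← pow_mul, show 3 * 2 = 6 from rfl, ← Real.rpow_natCast ((1:ℝ)/(n+1)) 6,
    ← Real.rpow_mul ha, ← Real.rpow_natCast ((1:ℝ)/(n+1)) 2]
  norm_num

/-- on `V : y³ = z²x³` the rational function `y/x` satisfies
`(y/x)³ = z²` where `x ≠ 0` and extends continuously to `V` as `(z²)^{1/3}`;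
along the arc `γ(t) = (0,0,t)` (contained in `V`) this extension equals
`t^{2/3} = (t^{1/3})²`, a Puiseux series in `t` which is not a formal power
series in `t` (it is not even analytic at `0`). -/
theorem stmt18 :
    (∀ p ∈ V18, p.1 ≠ 0 → (p.2.1 / p.1) ^ 3 = p.2.2 ^ 2) ∧
    ContinuousOn f18 V18 ∧
    (∀ p ∈ V18, p.1 ≠ 0 → f18 p = p.2.1 / p.1) ∧
    (∀ t : ℝ, ((0 : ℝ), (0 : ℝ), t) ∈ V18) ∧
    (∀ t : ℝ, 0 ≤ t → f18 (0, 0, t) = (t ^ ((1 : ℝ) / 3)) ^ 2) ∧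
    ¬ AnalyticAt ℝ (fun t : ℝ => f18 (0, 0, t)) 0 := by
  have key : ∀ p ∈ V18, p.1 ≠ 0 → (p.2.1 / p.1) ^ 3 = p.2.2 ^ 2 := by
    rintro ⟨x, y, z⟩ hp hx
    simp only [V18, Set.mem_setOf_eq] at hp
    field_simp
    linarith [hp]
  refine ⟨key, ?_, ?_, ?_, ?_, ?_⟩
  ·
    apply Continuous.continuousOn
    apply Continuous.rpow_const (by fun_prop)
    intro p; right; norm_num
  · rintro ⟨x, y, z⟩ hp hx
    have h3 := key _ hp hx
    have ha : 0 ≤ y / x := by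
      have : (0:ℝ) ≤ (y / x) ^ 3 := h3 ▸ sq_nonneg z
      exact (Odd.pow_nonneg_iff (by decide : Odd 3)).mp this
    simp only [f18]
    rw [← h3, cube_root_cube ha]
  · intro t; simp [V18]
  · intro t ht
    simp only [f18]
    rw [← Real.rpow_natCast t 2, ← Real.rpow_mul ht,
      ← Real.rpow_natCast (t ^ ((1:ℝ)/3)) 2, ← Real.rpow_mul ht]
    norm_num
  · intro h
    have hd := h.differentiableAt
    have hder := hd.hasDerivAt
    set c := deriv (fun t : ℝ => f18 (0, 0, t)) 0 with hc
    rw [hasDerivAt_iff_tendsto_slope] at hder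
    -- sequence xₙ = (1/(n+1))³
    set g := fun t : ℝ => f18 (0, 0, t)
    have hseq : Filter.Tendsto (fun n : ℕ => ((1 : ℝ) / (n + 1)) ^ 3)
        Filter.atTop (nhdsWithin 0 {(0:ℝ)}ᶜ) := by
      apply tendsto_nhdsWithin_of_tendsto_nhds_of_eventually_within
      · have : Filter.Tendsto (fun n : ℕ => ((1 : ℝ) / (n + 1))) Filter.atTop (nhds 0) :=
          tendsto_one_div_add_atTop_nhds_zero_nat
        simpa using this.pow 3
      · filter_upwards with n
        have : (0:ℝ) < ((1 : ℝ) / (n + 1)) ^ 3 := by positivity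
        exact ne_of_gt this
    have hcomp := hder.comp hseq
    have heq : (fun n : ℕ => slope g 0 (((1 : ℝ) / (n + 1)) ^ 3)) =
        fun n : ℕ => (n + 1 : ℝ) := by
      funext n
      have hx : ((1 : ℝ) / (n + 1)) ^ 3 ≠ 0 := by positivity
      have g0 : g 0 = 0 := by simp [g, f18, Real.zero_rpow]
      rw [slope_def_field, g0, sub_zero, sub_zero]
      show f18 (0, 0, ((1:ℝ)/(n+1))^3) / _ = _
      simp only [f18]
      rw [slope_calc n]
      field_simp
    have hcomp' : Filter.Tendsto (fun n : ℕ => (n + 1 : ℝ)) Filter.atTop (nhds c) := by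
      rw [← heq]; exact hcomp
    have : Filter.Tendsto (fun n : ℕ => (n + 1 : ℝ)) Filter.atTop Filter.atTop :=
      Filter.tendsto_atTop_add_const_right _ 1 tendsto_natCast_atTop_atTop
    exact not_tendsto_nhds_of_tendsto_atTop this c hcomp'
end
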